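/- The infinite series ∑_{k=1}^∞ H_{k+3}/((k+3)⁴) converges and equals -8681/7776 - ζ(2)·ζ(3) + 3·ζ(5). -/

import Mathlib

open Finset Filter Topology

/-- `harm k` is the `k`-th harmonic number `H_k = 1 + 1/2 + ⋯ + 1/k`. -/
noncomputable def harm (k : ℕ) : ℝ := ∑ i ∈ Finset.range k, (1 : ℝ) / (i + 1)

/-- `zeta m = ∑_{k=1}^∞ 1/k^m`, the Riemann zeta function at a natural argument. -/
noncomputable def zeta (m : ℕ) : ℝ := ∑' n : ℕ, (1 : ℝ) / (n + 1) ^ m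

lemma harm_succ (n : ℕ) : harm (n + 1) = harm n + 1 / ((n : ℝ) + 1) :=
  Finset.sum_range_succ _ n

lemma summable_zeta (m : ℕ) (hm : 2 ≤ m) :
    Summable (fun n : ℕ => (1 : ℝ) / ((n : ℝ) + 1) ^ m) := by
  have h : Summable (fun n : ℕ => 1 / (n : ℝ) ^ m) :=
    Real.summable_one_div_nat_pow.2 (by omega)
  have := (summable_nat_add_iff 1).2 h
  refine this.congr fun n => ?_
  push_cast
  ring

lemma hasSum_zeta (m : ℕ) (hm : 2 ≤ m) :
    HasSum (fun n : ℕ => (1 : ℝ) / ((n : ℝ) + 1) ^ m) (zeta m) :=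
  (summable_zeta m hm).hasSum

-- telescoping partial sums
lemma sum_tele (k n : ℕ) :
    ∑ m ∈ Finset.range n, ((1 : ℝ) / (m + 1) - 1 / ((m : ℝ) + (k : ℝ) + 2)) =
      harm n + harm (k + 1) - harm (n + k + 1) := by
  induction n with
  | zero => simp [harm]
  | succ n ih =>
      rw [Finset.sum_range_succ, ih]
      have h1 : n + 1 + k + 1 = (n + k + 1) + 1 := by omega
      rw [h1, harm_succ (n + k + 1), harm_succ n]
      push_cast
      ring

lemma harm_add_sub (n c : ℕ) :
    harm (n + c) - harm n = ∑ i ∈ Finset.range c, (1 : ℝ) / ((n : ℝ) + (i : ℝ) + 1) := by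
  induction c with
  | zero => simp
  | succ c ih =>
      have h1 : n + (c + 1) = (n + c) + 1 := by omega
      rw [h1, harm_succ, Finset.sum_range_succ, ← ih]
      push_cast
      ring

lemma harm_diff_le (n c : ℕ) : harm (n + c) - harm n ≤ (c : ℝ) / ((n : ℝ) + 1) := by
  rw [harm_add_sub]
  calc ∑ i ∈ Finset.range c, (1 : ℝ) / ((n : ℝ) + (i : ℝ) + 1)
      ≤ ∑ _i ∈ Finset.range c, (1 : ℝ) / ((n : ℝ) + 1) := by
        refine Finset.sum_le_sum fun i _ => ?_
        apply one_div_le_one_div_of_le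
        · positivity
        · have : (0:ℝ) ≤ i := Nat.cast_nonneg i
          linarith
    _ = (c : ℝ) / ((n : ℝ) + 1) := by
        rw [Finset.sum_const, Finset.card_range, nsmul_eq_mul, mul_one_div]

lemma hasSum_tele (k : ℕ) :
    HasSum (fun m : ℕ => (1 : ℝ) / ((m : ℝ) + 1) - 1 / ((m : ℝ) + (k : ℝ) + 2))
      (harm (k + 1)) := by
  have hnn : ∀ m : ℕ, 0 ≤ (1 : ℝ) / ((m : ℝ) + 1) - 1 / ((m : ℝ) + (k : ℝ) + 2) := by
    intro m
    have h1 : (1 : ℝ) / ((m : ℝ) + (k : ℝ) + 2) ≤ 1 / ((m : ℝ) + 1) := by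
      apply one_div_le_one_div_of_le
      · positivity
      · have : (0:ℝ) ≤ k := Nat.cast_nonneg k
        linarith
    linarith
  rw [hasSum_iff_tendsto_nat_of_nonneg hnn]
  have heq : (fun n : ℕ => ∑ m ∈ Finset.range n,
      ((1 : ℝ) / (m + 1) - 1 / ((m : ℝ) + (k : ℝ) + 2))) =
      fun n : ℕ => harm (k + 1) - (harm (n + (k + 1)) - harm n) := by
    funext n
    rw [sum_tele]
    have : n + (k + 1) = n + k + 1 := by omega
    rw [this]; ring
  rw [heq]
  have h0 : Tendsto (fun n : ℕ => harm (n + (k + 1)) - harm n) atTop (𝓝 0) := by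
    have hub : Tendsto (fun n : ℕ => ((k : ℝ) + 1) / ((n : ℝ) + 1)) atTop (𝓝 0) := by
      have := tendsto_one_div_add_atTop_nhds_zero_nat (𝕜 := ℝ)
      have h2 := this.const_mul ((k : ℝ) + 1)
      simpa [mul_one_div, mul_zero, div_eq_mul_inv] using h2
    refine squeeze_zero (fun n => ?_) (fun n => ?_) hub
    · rw [harm_add_sub]
      positivity
    · have := harm_diff_le n (k + 1)
      push_cast at this ⊢
      linarith
  have := (tendsto_const_nhds (x := harm (k+1)) (f := atTop (α := ℕ))).sub h0
  simpa using this

-- base summable double family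
lemma summable_base : Summable (fun p : ℕ × ℕ =>
    (1 : ℝ) / (((p.1 : ℝ) + 1) ^ 2 * ((p.2 : ℝ) + 1) ^ 2)) := by
  have h : Summable (fun n : ℕ => (1 : ℝ) / ((n : ℝ) + 1) ^ 2) := by
    have h0 : Summable (fun n : ℕ => 1 / (n : ℝ) ^ 2) :=
      Real.summable_one_div_nat_pow.2 (by omega)
    have := (summable_nat_add_iff 1).2 h0
    refine this.congr fun n => ?_
    push_cast; ring
  have := h.mul_of_nonneg h (fun n => by positivity) (fun n => by positivity)
  refine this.congr fun p => ?_
  rw [div_mul_div_comm, one_mul]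

lemma summable_dom (f : ℕ × ℕ → ℝ) (h0 : ∀ p, 0 ≤ f p)
    (hle : ∀ p : ℕ × ℕ, f p ≤ 1 / (((p.1 : ℝ) + 1) ^ 2 * ((p.2 : ℝ) + 1) ^ 2)) :
    Summable f :=
  Summable.of_nonneg_of_le h0 hle summable_base

section funs
-- K = p.1+1, M = p.2+1, N = p.1+p.2+2
noncomputable def ff1 (p : ℕ × ℕ) : ℝ :=
  1 / (((p.1 : ℝ) + 1) * ((p.2 : ℝ) + 1) * ((p.1 : ℝ) + (p.2 : ℝ) + 2) ^ 3)
noncomputable def ff2 (p : ℕ × ℕ) : ℝ :=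
  1 / (((p.2 : ℝ) + 1) * ((p.1 : ℝ) + (p.2 : ℝ) + 2) ^ 4)
noncomputable def gg3 (p : ℕ × ℕ) : ℝ :=
  1 / (((p.1 : ℝ) + 1) ^ 2 * ((p.1 : ℝ) + (p.2 : ℝ) + 2) ^ 3)
noncomputable def gg4 (p : ℕ × ℕ) : ℝ :=
  1 / (((p.1 : ℝ) + 1) ^ 3 * ((p.1 : ℝ) + (p.2 : ℝ) + 2) ^ 2)
noncomputable def ff4 (p : ℕ × ℕ) : ℝ :=
  1 / (((p.1 : ℝ) + 1) ^ 3 * ((p.2 : ℝ) + 1) * ((p.1 : ℝ) + (p.2 : ℝ) + 2))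
end funs

lemma Kpos (p : ℕ × ℕ) : (0:ℝ) < (p.1 : ℝ) + 1 := by positivity
lemma Mpos (p : ℕ × ℕ) : (0:ℝ) < (p.2 : ℝ) + 1 := by positivity

lemma summable_ff1 : Summable ff1 := by
  refine summable_dom _ (fun p => by unfold ff1; positivity) fun p => ?_
  unfold ff1
  apply one_div_le_one_div_of_le
  · positivity
  · obtain ⟨a, b⟩ := p
    set x : ℝ := (a : ℝ) + 1 with hxdef
    set y : ℝ := (b : ℝ) + 1 with hydef
    have hx : (1:ℝ) ≤ x := by simp [hxdef]
    have hy : (1:ℝ) ≤ y := by simp [hydef]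
    have hN : ((a:ℝ) + (b:ℝ) + 2) = x + y := by rw [hxdef, hydef]; ring
    rw [hN]
    have h1 : x*y ≤ (x+y)^2 := by nlinarith [sq_nonneg (x-y)]
    have h2 : (x+y)^2 ≤ (x+y)^3 := by nlinarith
    nlinarith [mul_le_mul_of_nonneg_left (h1.trans h2) (by nlinarith : (0:ℝ) ≤ x*y)]

lemma summable_ff2 : Summable ff2 := by
  refine summable_dom _ (fun p => by unfold ff2; positivity) fun p => ?_
  unfold ff2
  apply one_div_le_one_div_of_le
  · positivity
  · obtain ⟨a, b⟩ := p
    set x : ℝ := (a : ℝ) + 1 with hxdef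
    set y : ℝ := (b : ℝ) + 1 with hydef
    have hx : (1:ℝ) ≤ x := by simp [hxdef]
    have hy : (1:ℝ) ≤ y := by simp [hydef]
    have hN : ((a:ℝ) + (b:ℝ) + 2) = x + y := by rw [hxdef, hydef]; ring
    rw [hN]
    have hA : x^2 ≤ (x+y)^2 := by nlinarith
    have hB : y ≤ (x+y)^2 := by nlinarith
    have := mul_le_mul hA hB (by linarith) (by positivity)
    nlinarith [mul_le_mul_of_nonneg_left this (by linarith : (0:ℝ) ≤ y)]

lemma summable_gg3 : Summable gg3 := by
  refine summable_dom _ (fun p => by unfold gg3; positivity) fun p => ?_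
  unfold gg3
  apply one_div_le_one_div_of_le
  · positivity
  · obtain ⟨a, b⟩ := p
    set x : ℝ := (a : ℝ) + 1 with hxdef
    set y : ℝ := (b : ℝ) + 1 with hydef
    have hx : (1:ℝ) ≤ x := by simp [hxdef]
    have hy : (1:ℝ) ≤ y := by simp [hydef]
    have hN : ((a:ℝ) + (b:ℝ) + 2) = x + y := by rw [hxdef, hydef]; ring
    rw [hN]
    have h1 : y^2 ≤ (x+y)^2 := by nlinarith
    have h2 : (x+y)^2 ≤ (x+y)^3 := by nlinarith
    nlinarith [mul_le_mul_of_nonneg_left (h1.trans h2) (by nlinarith : (0:ℝ) ≤ x^2)]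

lemma summable_gg4 : Summable gg4 := by
  refine summable_dom _ (fun p => by unfold gg4; positivity) fun p => ?_
  unfold gg4
  apply one_div_le_one_div_of_le
  · positivity
  · obtain ⟨a, b⟩ := p
    set x : ℝ := (a : ℝ) + 1 with hxdef
    set y : ℝ := (b : ℝ) + 1 with hydef
    have hx : (1:ℝ) ≤ x := by simp [hxdef]
    have hy : (1:ℝ) ≤ y := by simp [hydef]
    have hN : ((a:ℝ) + (b:ℝ) + 2) = x + y := by rw [hxdef, hydef]; ring
    rw [hN]
    have h1 : y^2 ≤ (x+y)^2 := by nlinarith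
    have h2 : (x+y)^2 ≤ x*(x+y)^2 := by nlinarith
    nlinarith [mul_le_mul_of_nonneg_left (h1.trans h2) (by nlinarith : (0:ℝ) ≤ x^2)]

lemma summable_ff4 : Summable ff4 := by
  refine summable_dom _ (fun p => by unfold ff4; positivity) fun p => ?_
  unfold ff4
  apply one_div_le_one_div_of_le
  · positivity
  · obtain ⟨a, b⟩ := p
    set x : ℝ := (a : ℝ) + 1 with hxdef
    set y : ℝ := (b : ℝ) + 1 with hydef
    have hx : (1:ℝ) ≤ x := by simp [hxdef]
    have hy : (1:ℝ) ≤ y := by simp [hydef]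
    have hN : ((a:ℝ) + (b:ℝ) + 2) = x + y := by rw [hxdef, hydef]; ring
    rw [hN]
    have h1 : y ≤ x*(x+y) := by nlinarith
    nlinarith [mul_le_mul_of_nonneg_left h1 (by nlinarith : (0:ℝ) ≤ x^2*y)]

-- fiber of ff4
lemma hasSum_ff4_fiber (k : ℕ) :
    HasSum (fun m : ℕ => ff4 (k, m)) (harm (k + 1) / ((k : ℝ) + 1) ^ 4) := by
  have h := (hasSum_tele k).mul_left (1 / ((k : ℝ) + 1) ^ 4)
  have heq : (fun m : ℕ => 1 / ((k : ℝ) + 1) ^ 4 *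
      ((1 : ℝ) / ((m : ℝ) + 1) - 1 / ((m : ℝ) + (k : ℝ) + 2))) =
      fun m : ℕ => ff4 (k, m) := by
    funext m
    unfold ff4
    have h1 : (0:ℝ) < (m : ℝ) + 1 := by positivity
    have h2 : (0:ℝ) < (m : ℝ) + (k : ℝ) + 2 := by positivity
    have h3 : (0:ℝ) < (k : ℝ) + 1 := by positivity
    field_simp
    ring
  rw [heq] at h
  simpa [div_eq_inv_mul] using h

lemma hasSum_Sfun_ff4 :
    HasSum (fun k : ℕ => harm (k + 1) / ((k : ℝ) + 1) ^ 4) (∑' p, ff4 p) :=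
  summable_ff4.hasSum.prod_fiberwise fun k => hasSum_ff4_fiber k

section grouped

noncomputable def FF (p : ℕ × ℕ) : ℝ :=
  if p.2 < p.1 then 1 / (((p.2 : ℝ) + 1) * ((p.1 : ℝ) + 1) ^ 4) else 0
noncomputable def GG (p : ℕ × ℕ) : ℝ :=
  if p.2 < p.1 then 1 / (((p.2 : ℝ) + 1) ^ 2 * ((p.1 : ℝ) + 1) ^ 3) else 0
noncomputable def GG' (p : ℕ × ℕ) : ℝ :=
  if p.1 < p.2 then 1 / (((p.2 : ℝ) + 1) ^ 2 * ((p.1 : ℝ) + 1) ^ 3) else 0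
noncomputable def DD (p : ℕ × ℕ) : ℝ :=
  if p.1 = p.2 then 1 / (((p.1 : ℝ) + 1) ^ 5) else 0

end grouped

lemma hasSum_DD : HasSum DD (zeta 5) := by
  have hinj : Function.Injective (fun n : ℕ => (n, n)) := fun a b h => congrArg Prod.fst h
  have hvan : ∀ x ∉ Set.range (fun n : ℕ => (n, n)), DD x = 0 := by
    intro x hx
    unfold DD
    split_ifs with h
    · exact absurd ⟨x.1, by simp [Prod.ext_iff, h]⟩ hx
    · rfl
  rw [← hinj.hasSum_iff hvan]
  have h5 := hasSum_zeta 5 (by norm_num)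
  have heq : (DD ∘ fun n : ℕ => (n, n)) = fun n : ℕ => (1 : ℝ) / ((n : ℝ) + 1) ^ 5 := by
    funext n; simp [DD, Function.comp]
  rw [heq]
  exact h5

lemma hasSum_FF : HasSum FF (∑' p, ff2 p) := by
  have hinj : Function.Injective (fun p : ℕ × ℕ => (p.1 + p.2 + 1, p.2)) := by
    intro a b h
    simp only [Prod.mk.injEq] at h
    rw [Prod.ext_iff]
    exact ⟨by omega, by omega⟩
  have hvan : ∀ x ∉ Set.range (fun p : ℕ × ℕ => (p.1 + p.2 + 1, p.2)), FF x = 0 := by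
    intro x hx
    unfold FF
    split_ifs with h
    · exact absurd ⟨(x.1 - x.2 - 1, x.2), by simp [Prod.ext_iff]; omega⟩ hx
    · rfl
  rw [← hinj.hasSum_iff hvan]
  have heq : (FF ∘ fun p : ℕ × ℕ => (p.1 + p.2 + 1, p.2)) = ff2 := by
    funext p
    have hc : p.2 < p.1 + p.2 + 1 := by omega
    simp only [FF, ff2, Function.comp, hc, if_true]
    push_cast
    ring_nf
  rw [heq]
  exact summable_ff2.hasSum

lemma hasSum_GG : HasSum GG (∑' p, gg3 p) := by
  have hinj : Function.Injective (fun p : ℕ × ℕ => (p.1 + p.2 + 1, p.1)) := by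
    intro a b h
    simp only [Prod.mk.injEq] at h
    rw [Prod.ext_iff]
    exact ⟨by omega, by omega⟩
  have hvan : ∀ x ∉ Set.range (fun p : ℕ × ℕ => (p.1 + p.2 + 1, p.1)), GG x = 0 := by
    intro x hx
    unfold GG
    split_ifs with h
    · exact absurd ⟨(x.2, x.1 - x.2 - 1), by simp [Prod.ext_iff]; omega⟩ hx
    · rfl
  rw [← hinj.hasSum_iff hvan]
  have heq : (GG ∘ fun p : ℕ × ℕ => (p.1 + p.2 + 1, p.1)) = gg3 := by
    funext p
    have hc : p.1 < p.1 + p.2 + 1 := by omega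
    simp only [GG, gg3, Function.comp, hc, if_true]
    push_cast
    ring_nf
  rw [heq]
  exact summable_gg3.hasSum

lemma hasSum_GG' : HasSum GG' (∑' p, gg4 p) := by
  have hinj : Function.Injective (fun p : ℕ × ℕ => (p.1, p.1 + p.2 + 1)) := by
    intro a b h
    simp only [Prod.mk.injEq] at h
    rw [Prod.ext_iff]
    exact ⟨by omega, by omega⟩
  have hvan : ∀ x ∉ Set.range (fun p : ℕ × ℕ => (p.1, p.1 + p.2 + 1)), GG' x = 0 := by
    intro x hx
    unfold GG'
    split_ifs with h
    · exact absurd ⟨(x.1, x.2 - x.1 - 1), by simp [Prod.ext_iff]; omega⟩ hx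
    · rfl
  rw [← hinj.hasSum_iff hvan]
  have heq : (GG' ∘ fun p : ℕ × ℕ => (p.1, p.1 + p.2 + 1)) = gg4 := by
    funext p
    have hc : p.1 < p.1 + p.2 + 1 := by omega
    simp only [GG', gg4, Function.comp, hc, if_true]
    push_cast
    ring_nf
  rw [heq]
  exact summable_gg4.hasSum

noncomputable def Ffull (p : ℕ × ℕ) : ℝ :=
  if p.2 ≤ p.1 then 1 / (((p.2 : ℝ) + 1) * ((p.1 : ℝ) + 1) ^ 4) else 0

lemma Ffull_eq : Ffull = FF + DD := by
  funext p
  obtain ⟨a, b⟩ := p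
  simp only [Ffull, FF, DD, Pi.add_apply]
  rcases lt_trichotomy b a with h | h | h
  · rw [if_pos h.le, if_pos h, if_neg (show ¬ a = b by omega)]; ring
  · subst h
    rw [if_pos le_rfl, if_neg (lt_irrefl _), if_pos rfl]; ring
  · rw [if_neg (show ¬ b ≤ a by omega), if_neg (show ¬ b < a by omega),
      if_neg (show ¬ a = b by omega)]
    ring

lemma hasSum_Ffull_fiber (a : ℕ) :
    HasSum (fun b : ℕ => Ffull (a, b)) (harm (a + 1) / ((a : ℝ) + 1) ^ 4) := by
  have hz : ∀ b ∉ Finset.range (a + 1), Ffull (a, b) = 0 := by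
    intro b hb
    simp only [Finset.mem_range] at hb
    show (if b ≤ a then 1 / (((b : ℝ) + 1) * ((a : ℝ) + 1) ^ 4) else 0) = 0
    rw [if_neg (by omega)]
  have h : HasSum (fun b : ℕ => Ffull (a, b)) (∑ b ∈ Finset.range (a + 1), Ffull (a, b)) :=
    hasSum_sum_of_ne_finset_zero hz
  have heq : ∑ b ∈ Finset.range (a + 1), Ffull (a, b)
      = harm (a + 1) / ((a : ℝ) + 1) ^ 4 := by
    rw [harm, Finset.sum_div]
    refine Finset.sum_congr rfl fun b hb => ?_
    simp only [Finset.mem_range] at hb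
    show (if b ≤ a then 1 / (((b : ℝ) + 1) * ((a : ℝ) + 1) ^ 4) else 0)
      = 1 / ((b : ℝ) + 1) / ((a : ℝ) + 1) ^ 4
    rw [if_pos (by omega), div_div]
  rwa [heq] at h

lemma hasSum_Sfun_F : HasSum (fun a : ℕ => harm (a + 1) / ((a : ℝ) + 1) ^ 4)
    ((∑' p, ff2 p) + zeta 5) := by
  have hF : HasSum Ffull ((∑' p, ff2 p) + zeta 5) := by
    rw [Ffull_eq]
    exact hasSum_FF.add hasSum_DD
  exact hF.prod_fiberwise fun a => hasSum_Ffull_fiber a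

noncomputable def QQ (p : ℕ × ℕ) : ℝ :=
  1 / (((p.1 : ℝ) + 1) ^ 3 * ((p.2 : ℝ) + 1) ^ 2)

lemma QQ_eq : QQ = GG + GG' + DD := by
  funext p
  obtain ⟨a, b⟩ := p
  simp only [QQ, GG, GG', DD, Pi.add_apply]
  rcases lt_trichotomy b a with h | h | h
  · rw [if_pos h, if_neg (show ¬ a < b by omega), if_neg (show ¬ a = b by omega)]; ring
  · subst h
    rw [if_pos rfl]
    simp only [lt_irrefl, if_false]
    ring
  · rw [if_neg (show ¬ b < a by omega), if_pos h, if_neg (show ¬ a = b by omega)]; ring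

lemma summable_QQ : Summable QQ := by
  have h3 := summable_zeta 3 (by norm_num)
  have h2 := summable_zeta 2 (by norm_num)
  have := h3.mul_of_nonneg h2 (fun n => by positivity) (fun n => by positivity)
  refine this.congr fun p => ?_
  unfold QQ
  rw [div_mul_div_comm, one_mul]

lemma hasSum_QQ : HasSum QQ (zeta 3 * zeta 2) := by
  have hQ : HasSum (fun x : ℕ × ℕ =>
      (1 / ((x.1 : ℝ) + 1) ^ 3) * (1 / ((x.2 : ℝ) + 1) ^ 2)) (∑' p, QQ p) := by
    have heq : (fun x : ℕ × ℕ =>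
        (1 / ((x.1 : ℝ) + 1) ^ 3) * (1 / ((x.2 : ℝ) + 1) ^ 2)) = QQ := by
      funext p; unfold QQ; rw [div_mul_div_comm, one_mul]
    rw [heq]
    exact summable_QQ.hasSum
  have hval := (hasSum_zeta 3 (by norm_num)).mul_eq (hasSum_zeta 2 (by norm_num)) hQ
  rw [hval]
  exact summable_QQ.hasSum

lemma key1 : zeta 3 * zeta 2 = (∑' p, gg3 p) + (∑' p, gg4 p) + zeta 5 := by
  have h1 : HasSum QQ ((∑' p, gg3 p) + (∑' p, gg4 p) + zeta 5) := by
    rw [QQ_eq]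
    exact (hasSum_GG.add hasSum_GG').add hasSum_DD
  exact hasSum_QQ.unique h1

lemma key2 : (∑' p, ff4 p) = (∑' p, ff2 p) + zeta 5 :=
  hasSum_Sfun_ff4.unique hasSum_Sfun_F

lemma key3 : (∑' p, ff1 p) = 2 * (∑' p, ff2 p) := by
  have hswap : HasSum (fun p : ℕ × ℕ => ff2 (p.2, p.1)) (∑' p, ff2 p) :=
    ((Equiv.prodComm ℕ ℕ).hasSum_iff).2 summable_ff2.hasSum
  have hadd : HasSum (fun p : ℕ × ℕ => ff2 p + ff2 (p.2, p.1))
      ((∑' p, ff2 p) + (∑' p, ff2 p)) := summable_ff2.hasSum.add hswap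
  have heq : (fun p : ℕ × ℕ => ff2 p + ff2 (p.2, p.1)) = ff1 := by
    funext p
    obtain ⟨a, b⟩ := p
    unfold ff1 ff2
    have h1 : (0:ℝ) < (a : ℝ) + 1 := by positivity
    have h2 : (0:ℝ) < (b : ℝ) + 1 := by positivity
    have h3 : (0:ℝ) < (a : ℝ) + (b : ℝ) + 2 := by positivity
    have h4 : (0:ℝ) < (b : ℝ) + (a : ℝ) + 2 := by positivity
    field_simp
    ring
  rw [heq] at hadd
  rw [summable_ff1.hasSum.unique hadd]
  ring

lemma key4 : (∑' p, ff4 p) = (∑' p, ff1 p) + (∑' p, gg3 p) + (∑' p, gg4 p) := by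
  have hadd : HasSum (fun p : ℕ × ℕ => ff1 p + gg3 p + gg4 p)
      ((∑' p, ff1 p) + (∑' p, gg3 p) + (∑' p, gg4 p)) :=
    (summable_ff1.hasSum.add summable_gg3.hasSum).add summable_gg4.hasSum
  have heq : (fun p : ℕ × ℕ => ff1 p + gg3 p + gg4 p) = ff4 := by
    funext p
    obtain ⟨a, b⟩ := p
    unfold ff1 ff4 gg3 gg4
    have h1 : (0:ℝ) < (a : ℝ) + 1 := by positivity
    have h2 : (0:ℝ) < (b : ℝ) + 1 := by positivity
    have h3 : (0:ℝ) < (a : ℝ) + (b : ℝ) + 2 := by positivity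
    field_simp
    ring
  rw [heq] at hadd
  exact summable_ff4.hasSum.unique hadd

lemma hasSum_main : HasSum (fun n : ℕ => harm (n + 1) / ((n : ℝ) + 1) ^ 4)
    (3 * zeta 5 - zeta 2 * zeta 3) := by
  have h2 : (∑' p, ff2 p) = 2 * zeta 5 - zeta 3 * zeta 2 := by
    have k1 := key1
    have k2 := key2
    have k3 := key3
    have k4 := key4
    linarith
  have := hasSum_Sfun_F
  rw [h2] at this
  have hval : 2 * zeta 5 - zeta 3 * zeta 2 + zeta 5 = 3 * zeta 5 - zeta 2 * zeta 3 := by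
    ring
  rwa [hval] at this

theorem stmt_11 :
    HasSum (fun k : ℕ => harm (k + 4) / ((k : ℝ) + 4) ^ 4)
      (-8681 / 7776 - zeta 2 * zeta 3 + 3 * zeta 5) := by
  have h := hasSum_main
  have h3 : HasSum (fun n : ℕ => harm (n + 3 + 1) / (((n + 3 : ℕ) : ℝ) + 1) ^ 4)
      (-8681 / 7776 - zeta 2 * zeta 3 + 3 * zeta 5) := by
    apply (hasSum_nat_add_iff (f := fun n : ℕ => harm (n + 1) / ((n : ℝ) + 1) ^ 4) 3).2
    have hsum3 : ∑ i ∈ Finset.range 3, harm (i + 1) / ((i : ℝ) + 1) ^ 4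
        = 8681 / 7776 := by
      simp [Finset.sum_range_succ, harm]
      norm_num
    rw [hsum3]
    have hv : -8681 / 7776 - zeta 2 * zeta 3 + 3 * zeta 5 + 8681 / 7776
        = 3 * zeta 5 - zeta 2 * zeta 3 := by ring
    rw [hv]
    exact h
  have heq : (fun n : ℕ => harm (n + 3 + 1) / (((n + 3 : ℕ) : ℝ) + 1) ^ 4)
      = fun k : ℕ => harm (k + 4) / ((k : ℝ) + 4) ^ 4 := by
    funext n
    have hn : n + 3 + 1 = n + 4 := by omega
    rw [hn]
    push_cast
    ring_nf
  rwa [heq] at h3
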